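/- arXiv:2208.11862 — 4 statements merged into one kernel-verified Lean document; each statement's English description precedes it below -/
import Mathlib

section
/- Let $0<l<1$ and let $c:(-\infty,0)\to\mathbb{R}$ be a function admitting one-sided derivatives $c'_\pm(\lambda)$ satisfying $c'_+(\lambda)\lambda \le c'_-(\lambda)\lambda \le (\tfrac1l - 1)c(\lambda)$ for all $\lambda<-1$, with $c(-1)<0$. Then $c(\lambda) \le c(-1)(-\lambda)^{1/l - 1}$ for all $\lambda < -1$; in particular $c(\lambda)\to -\infty$ as $\lambda\to-\infty$. -/
open Filter Topology

theorem stmt1 (l : ℝ) (hl0 : 0 < l) (hl1 : l < 1)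
    (c cp cm : ℝ → ℝ)
    (hderiv : ∀ lam < (0:ℝ), HasDerivWithinAt c (cm lam) (Set.Iic lam) lam ∧
      HasDerivWithinAt c (cp lam) (Set.Ici lam) lam)
    (hineq : ∀ lam < (-1:ℝ), cp lam * lam ≤ cm lam * lam ∧
      cm lam * lam ≤ (1/l - 1) * c lam)
    (hc1 : c (-1) < 0) :
    (∀ lam < (-1:ℝ), c lam ≤ c (-1) * (-lam) ^ (1/l - 1)) ∧
      Tendsto c atBot atBot := by
  set α : ℝ := 1/l - 1 with hα
  have hαpos : 0 < α := by
    have h : 1 < 1/l := by rw [lt_div_iff₀ hl0]; linarith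
    rw [hα]; linarith
  -- continuity of c at any point < 0
  have hcont : ∀ x < (0:ℝ), ContinuousAt c x := by
    intro x hx
    obtain ⟨h1, h2⟩ := hderiv x hx
    have := (h1.continuousWithinAt.union h2.continuousWithinAt)
    rwa [Set.Iic_union_Ici, continuousWithinAt_univ] at this
  -- the auxiliary function q
  set q : ℝ → ℝ := fun x => c x * (-x) ^ (-α) with hq
  have hg : ∀ x < (0:ℝ), HasDerivAt (fun y : ℝ => (-y) ^ (-α)) (α * (-x) ^ (-α - 1)) x := by
    intro x hx
    have hne : -x ≠ 0 := ne_of_gt (by linarith)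
    have h0 : HasDerivAt (fun y : ℝ => -y) (-1) x := hasDerivAt_neg x
    have := h0.rpow_const (p := -α) (Or.inl hne)
    convert this using 1
    ring
  have hqcont : ∀ x < (0:ℝ), ContinuousAt q x := by
    intro x hx
    exact (hcont x hx).mul (hg x hx).continuousAt
  have hq' : ∀ x < (-1:ℝ), HasDerivWithinAt q
      (cp x * (-x) ^ (-α) + c x * (α * (-x) ^ (-α - 1))) (Set.Ici x) x := by
    intro x hx
    have hx0 : x < 0 := by linarith
    exact ((hderiv x hx0).2).mul ((hg x hx0).hasDerivWithinAt)
  have hq'nonneg : ∀ x < (-1:ℝ), 0 ≤ cp x * (-x) ^ (-α) + c x * (α * (-x) ^ (-α - 1)) := by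
    intro x hx
    have hx0 : (0:ℝ) < -x := by linarith
    have h1 : cp x * x ≤ α * c x := le_trans (hineq x hx).1 (hineq x hx).2
    have ht : (0:ℝ) < (-x) ^ (-α - 1) := Real.rpow_pos_of_pos hx0 _
    have heq : (-x) ^ (-α) = (-x) ^ (-α - 1) * (-x) := by
      rw [← Real.rpow_add_one (ne_of_gt hx0)]
      ring_nf
    rw [heq]
    nlinarith [mul_le_mul_of_nonneg_left h1 (le_of_lt ht)]
  -- key monotonicity: q lam ≤ q (-1) for lam ≤ -1
  have hmono : ∀ lam < (-1:ℝ), q lam ≤ q (-1) := by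
    intro lam hlam
    have key : ∀ ⦃x⦄, x ∈ Set.Icc lam (-1:ℝ) → (fun _ : ℝ => q lam) x ≤ q x := by
      refine image_le_of_deriv_right_le_deriv_boundary (f := fun _ : ℝ => q lam)
        (f' := fun _ => (0:ℝ)) (B := q)
        (B' := fun x => cp x * (-x) ^ (-α) + c x * (α * (-x) ^ (-α - 1)))
        continuousOn_const (fun x _ => hasDerivWithinAt_const x _ _) le_rfl
        (fun x hx => (hqcont x (by have := hx.2; linarith)).continuousWithinAt)
        (fun x hx => hq' x hx.2) (fun x hx => hq'nonneg x hx.2)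
    exact key (Set.right_mem_Icc.2 (le_of_lt hlam))
  have hq1 : q (-1) = c (-1) := by
    simp [hq, Real.one_rpow]
  have main : ∀ lam < (-1:ℝ), c lam ≤ c (-1) * (-lam) ^ α := by
    intro lam hlam
    have hl0' : (0:ℝ) < -lam := by linarith
    have h := hmono lam hlam
    rw [hq1] at h
    have h2 := mul_le_mul_of_nonneg_right h (le_of_lt (Real.rpow_pos_of_pos hl0' α))
    have heq : q lam * (-lam) ^ α = c lam := by
      rw [hq]
      simp only
      rw [mul_assoc, ← Real.rpow_add hl0']
      simp
    rwa [heq] at h2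
  refine ⟨main, ?_⟩
  have htop : Tendsto (fun lam : ℝ => c (-1) * (-lam) ^ α) atBot atBot := by
    apply Tendsto.const_mul_atTop_of_neg hc1
    exact (tendsto_rpow_atTop hαpos).comp tendsto_neg_atBot_atTop
  apply tendsto_atBot_mono' _ _ htop
  filter_upwards [eventually_lt_atBot (-1:ℝ)] with lam hlam
  exact main lam hlam
end

section
/- Let $k>1$ and let $c:(-\infty,0)\to\mathbb{R}$ be a function with one-sided derivatives satisfying $c'_\pm(\lambda)\lambda \ge (\tfrac1k - 1)c(\lambda)$ for all $\lambda<-1$ and $c(\lambda)<0$ on $(-\infty,0)$. Then $c(\lambda) \ge c(-1)(-\lambda)^{1/k-1}$ for $\lambda<-1$, and hence $c(\lambda)\to 0$ as $\lambda\to -\infty$. -/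
open Filter Topology

theorem stmt2 (k : ℝ) (hk : 1 < k)
    (c cp cm : ℝ → ℝ)
    (hderiv : ∀ lam < (0:ℝ), HasDerivWithinAt c (cm lam) (Set.Iic lam) lam ∧
      HasDerivWithinAt c (cp lam) (Set.Ici lam) lam)
    (hineq : ∀ lam < (-1:ℝ), (1/k - 1) * c lam ≤ cp lam * lam ∧
      (1/k - 1) * c lam ≤ cm lam * lam)
    (hcneg : ∀ lam < (0:ℝ), c lam < 0) :
    (∀ lam < (-1:ℝ), c (-1) * (-lam) ^ (1/k - 1) ≤ c lam) ∧
      Tendsto c atBot (𝓝 0) := by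
  set p : ℝ := 1 - 1/k with hp_def
  have hk0 : (0:ℝ) < k := lt_trans one_pos hk
  have hp_pos : 0 < p := by
    have h1 : 1/k < 1 := by
      rw [div_lt_one hk0]; exact hk
    rw [hp_def]; linarith
  have hpe : 1/k - 1 = -p := by ring
  -- continuity of c on (-∞, 0)
  have hcont : ∀ x < (0:ℝ), ContinuousAt c x := by
    intro x hx
    have h1 := (hderiv x hx).1.continuousWithinAt
    have h2 := (hderiv x hx).2.continuousWithinAt
    have := h1.union h2
    rwa [Set.Iic_union_Ici, continuousWithinAt_univ] at this
  -- the auxiliary function and its right derivative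
  set f : ℝ → ℝ := fun x => c x * (-x) ^ p with hf_def
  set f' : ℝ → ℝ := fun x => cp x * (-x) ^ p + c x * (p * (-x) ^ (p - 1) * (-1))
    with hf'_def
  have hfd : ∀ x < (0:ℝ), HasDerivWithinAt f (f' x) (Set.Ici x) x := by
    intro x hx
    have hxne : -x ≠ 0 := neg_ne_zero.mpr hx.ne
    have hg : HasDerivAt (fun y : ℝ => (-y) ^ p) (p * (-x) ^ (p - 1) * (-1)) x := by
      have h1 : HasDerivAt (fun y : ℝ => -y) (-1) x := by
        simpa using (hasDerivAt_neg x)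
      exact (Real.hasDerivAt_rpow_const (Or.inl hxne)).comp x h1
    exact (hderiv x hx).2.mul hg.hasDerivWithinAt
  -- key monotonicity estimate
  have key : ∀ lam < (-1:ℝ), c (-1) ≤ c lam * (-lam) ^ p := by
    intro lam hlam
    have hmain : ∀ ⦃x⦄, x ∈ Set.Icc lam (-1:ℝ) → f x ≤ c lam * (-lam) ^ p := by
      refine image_le_of_deriv_right_le_deriv_boundary (f := f) (f' := f')
        (B := fun _ => c lam * (-lam) ^ p) (B' := fun _ => 0) ?_ ?_ ?_
        (continuousOn_const) (fun x _ => hasDerivWithinAt_const x _ _) ?_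
      · intro x hx
        have hx0 : x < 0 := lt_of_le_of_lt hx.2 (by norm_num)
        have hxne : -x ≠ 0 := neg_ne_zero.mpr hx0.ne
        have hg : ContinuousAt (fun y : ℝ => (-y) ^ p) x :=
          (Real.continuousAt_rpow_const (-x) p (Or.inl hxne)).comp
            (continuous_neg.continuousAt)
        exact ((hcont x hx0).mul hg).continuousWithinAt
      · intro x hx
        have hx0 : x < 0 := lt_trans hx.2 (by norm_num)
        exact hfd x hx0
      · simp [hf_def]
      · intro x hx
        have hx1 : x < -1 := hx.2
        have hx0 : x < 0 := lt_trans hx1 (by norm_num)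
        have hxpos : 0 < -x := by linarith
        have hA : (0:ℝ) < (-x) ^ (p - 1) := Real.rpow_pos_of_pos hxpos _
        have hrw : (-x) ^ p = (-x) ^ (p - 1) * (-x) := by
          rw [← Real.rpow_add_one (ne_of_gt hxpos)]; ring_nf
        have hineq' := (hineq x hx1).1
        rw [hpe] at hineq'
        -- cp x * (-x) ≤ p * c x
        have h2 : cp x * (-x) ≤ p * c x := by nlinarith
        have : f' x = (-x) ^ (p - 1) * (cp x * (-x) - p * c x) := by
          simp only [hf'_def, hrw]; ring
        rw [this]
        exact mul_nonpos_of_nonneg_of_nonpos hA.le (by linarith)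
    have := hmain (Set.right_mem_Icc.mpr hlam.le)
    simpa [hf_def] using this
  have hbound : ∀ lam < (-1:ℝ), c (-1) * (-lam) ^ (1/k - 1) ≤ c lam := by
    intro lam hlam
    have hlpos : 0 < -lam := by linarith
    have hkey := key lam hlam
    have hr : (0:ℝ) < (-lam) ^ (-p) := Real.rpow_pos_of_pos hlpos _
    have := mul_le_mul_of_nonneg_right hkey hr.le
    rw [mul_assoc, ← Real.rpow_add hlpos, add_neg_cancel, Real.rpow_zero, mul_one] at this
    rwa [hpe]
  refine ⟨hbound, ?_⟩
  have hlow : Tendsto (fun lam : ℝ => c (-1) * (-lam) ^ (1/k - 1)) atBot (𝓝 0) := by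
    have h1 : Tendsto (fun lam : ℝ => (-lam) ^ (-p)) atBot (𝓝 0) :=
      (tendsto_rpow_neg_atTop hp_pos).comp tendsto_neg_atBot_atTop
    have := h1.const_mul (c (-1))
    rw [mul_zero] at this
    simp only [hpe]
    exact this
  refine tendsto_of_tendsto_of_tendsto_of_le_of_le' hlow tendsto_const_nhds ?_ ?_
  · filter_upwards [eventually_lt_atBot (-1:ℝ)] with lam hlam
    exact hbound lam hlam
  · filter_upwards [eventually_lt_atBot (0:ℝ)] with lam hlam
    exact (hcneg lam hlam).le
end

section
/- Let $S,F,Q:W\to[0,\infty)$ be functionals on a normed space $W$, and let $(\lambda_n,u_n)$ be a sequence with: (i) $F(u_n)\ge \frac1d S(u_n) > 0$ and $-\lambda_n Q(u_n)\ge e F(u_n)>0$ for constants $d,e>0$; (ii) $F(u_n)\le C[S(u_n)^{\theta_1}Q(u_n)^{\tau_1}+S(u_n)^{\theta_2}Q(u_n)^{\tau_2}]$ with $C>0$, $\theta_i>1$, $\tau_i>0$; and (iii) $\lambda_n\to 0^-$ with $\lambda_n<0$. Then $Q(u_n)\to+\infty$. -/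
/-!
Write `s, f, q` for `S (u n), F (u n), Q (u n)` and `r = -λₙ / e`. The hypotheses give `s ≤ d f`
and `f ≤ r q`, so `s ^ θ q ^ τ ≤ f · d ^ θ r ^ (θ - 1) q ^ (θ - 1 + τ)`, and dividing the
interpolation bound by `f > 0` leaves
`1 ≤ C (d ^ θ₁ r ^ (θ₁ - 1) q ^ (θ₁ - 1 + τ₁) + d ^ θ₂ r ^ (θ₂ - 1) q ^ (θ₂ - 1 + τ₂))`.
Since `θᵢ > 1` and `r → 0`, the right-hand side tends to `0` along any stretch where `q` stays
bounded, so `q` cannot stay bounded.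
-/

open Filter Topology

noncomputable def interpolationTerm (d θ τ r q : ℝ) : ℝ :=
  d ^ θ * r ^ (θ - 1) * q ^ (θ - 1 + τ)

lemma rpow_mul_rpow_le_mul_interpolationTerm {s f q d r θ τ : ℝ} (hs : 0 ≤ s) (hf : 0 ≤ f)
    (hq : 0 < q) (hd : 0 ≤ d) (hr : 0 ≤ r) (hθ : 1 ≤ θ) (hsf : s ≤ d * f) (hfq : f ≤ r * q) :
    s ^ θ * q ^ τ ≤ f * interpolationTerm d θ τ r q := by
  have hf_rpow : f ^ θ = f * f ^ (θ - 1) := by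
    rw [← Real.rpow_one_add' hf (by linarith), add_sub_cancel]
  calc s ^ θ * q ^ τ ≤ (d * f) ^ θ * q ^ τ := by gcongr
    _ = d ^ θ * f * f ^ (θ - 1) * q ^ τ := by rw [Real.mul_rpow hd hf, hf_rpow]; ring
    _ ≤ d ^ θ * f * (r * q) ^ (θ - 1) * q ^ τ := by gcongr
    _ = f * interpolationTerm d θ τ r q := by
      rw [interpolationTerm, Real.mul_rpow hr hq.le, Real.rpow_add hq]; ring

lemma one_le_interpolationTerm_add {s f q d r C θ₁ θ₂ τ₁ τ₂ : ℝ} (hs : 0 ≤ s) (hf : 0 < f)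
    (hq : 0 < q) (hd : 0 ≤ d) (hr : 0 ≤ r) (hC : 0 ≤ C) (hθ₁ : 1 ≤ θ₁) (hθ₂ : 1 ≤ θ₂)
    (hsf : s ≤ d * f) (hfq : f ≤ r * q)
    (hinterp : f ≤ C * (s ^ θ₁ * q ^ τ₁ + s ^ θ₂ * q ^ τ₂)) :
    1 ≤ C * (interpolationTerm d θ₁ τ₁ r q + interpolationTerm d θ₂ τ₂ r q) := by
  rw [← le_mul_iff_one_le_right hf]
  calc f ≤ C * (s ^ θ₁ * q ^ τ₁ + s ^ θ₂ * q ^ τ₂) := hinterp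
    _ ≤ C * (f * interpolationTerm d θ₁ τ₁ r q + f * interpolationTerm d θ₂ τ₂ r q) :=
      mul_le_mul_of_nonneg_left (add_le_add
        (rpow_mul_rpow_le_mul_interpolationTerm hs hf.le hq hd hr hθ₁ hsf hfq)
        (rpow_mul_rpow_le_mul_interpolationTerm hs hf.le hq hd hr hθ₂ hsf hfq)) hC
    _ = f * (C * (interpolationTerm d θ₁ τ₁ r q + interpolationTerm d θ₂ τ₂ r q)) := by ring

lemma interpolationTerm_le_interpolationTerm {d θ τ r q q' : ℝ} (hd : 0 ≤ d) (hr : 0 ≤ r)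
    (hα : 0 ≤ θ - 1 + τ) (hq : 0 ≤ q) (hqq' : q ≤ q') :
    interpolationTerm d θ τ r q ≤ interpolationTerm d θ τ r q' := by
  unfold interpolationTerm
  gcongr

lemma tendsto_interpolationTerm_nhds_zero {d θ τ q : ℝ} (hθ : 1 < θ) :
    Tendsto (fun r => interpolationTerm d θ τ r q) (𝓝 0) (𝓝 0) := by
  have h := ((Real.continuousAt_rpow_const 0 (θ - 1) (Or.inr (by linarith))).tendsto.const_mul
    (d ^ θ)).mul_const (q ^ (θ - 1 + τ))
  rwa [Real.zero_rpow (by linarith), mul_zero, zero_mul] at h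

lemma tendsto_atTop_of_one_le_interpolationTerm_add {ι : Type*} {l : Filter ι} {r q : ι → ℝ}
    {d C θ₁ θ₂ τ₁ τ₂ : ℝ} (hd : 0 ≤ d) (hC : 0 ≤ C) (hθ₁ : 1 < θ₁) (hθ₂ : 1 < θ₂)
    (hα₁ : 0 ≤ θ₁ - 1 + τ₁) (hα₂ : 0 ≤ θ₂ - 1 + τ₂) (hr0 : ∀ i, 0 ≤ r i) (hq0 : ∀ i, 0 ≤ q i)
    (hr : Tendsto r l (𝓝 0))
    (h : ∀ i, 1 ≤ C * (interpolationTerm d θ₁ τ₁ (r i) (q i) +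
      interpolationTerm d θ₂ τ₂ (r i) (q i))) :
    Tendsto q l atTop := by
  refine tendsto_atTop.2 fun M => ?_
  have hsmall : ∀ᶠ i in l,
      C * (interpolationTerm d θ₁ τ₁ (r i) M + interpolationTerm d θ₂ τ₂ (r i) M) < 1 := by
    have h0 := (((tendsto_interpolationTerm_nhds_zero (d := d) (τ := τ₁) (q := M) hθ₁).add
      (tendsto_interpolationTerm_nhds_zero (d := d) (τ := τ₂) (q := M) hθ₂)).const_mul C).comp hr
    rw [add_zero, mul_zero] at h0
    exact h0.eventually_lt_const one_pos
  filter_upwards [hsmall] with i hsmall_i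
  by_contra! hqM
  have hmono : C * (interpolationTerm d θ₁ τ₁ (r i) (q i) + interpolationTerm d θ₂ τ₂ (r i) (q i))
      ≤ C * (interpolationTerm d θ₁ τ₁ (r i) M + interpolationTerm d θ₂ τ₂ (r i) M) := by
    gcongr
    · exact interpolationTerm_le_interpolationTerm hd (hr0 i) hα₁ (hq0 i) hqM.le
    · exact interpolationTerm_le_interpolationTerm hd (hr0 i) hα₂ (hq0 i) hqM.le
  exact ((h i).trans hmono).not_gt hsmall_i

theorem stmt5_general {W : Type*}
    (S F Q : W → ℝ)
    (lam : ℕ → ℝ) (u : ℕ → W)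
    (d e C θ₁ θ₂ τ₁ τ₂ : ℝ) (hd : 0 < d) (he : 0 < e) (hC : 0 < C)
    (hθ₁ : 1 < θ₁) (hθ₂ : 1 < θ₂) (hτ₁ : 0 < τ₁) (hτ₂ : 0 < τ₂)
    (h1 : ∀ n, (1/d) * S (u n) ≤ F (u n) ∧ 0 < S (u n))
    (h2 : ∀ n, e * F (u n) ≤ -(lam n) * Q (u n) ∧ 0 < F (u n))
    (h3 : ∀ n, F (u n) ≤ C * (S (u n) ^ θ₁ * Q (u n) ^ τ₁ + S (u n) ^ θ₂ * Q (u n) ^ τ₂))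
    (h4 : ∀ n, lam n < 0) (h5 : Tendsto lam atTop (𝓝 0)) :
    Tendsto (fun n => Q (u n)) atTop atTop := by
  have hr0 : ∀ n, 0 ≤ -lam n / e := fun n => div_nonneg (neg_nonneg.2 (h4 n).le) he.le
  have hQ : ∀ n, 0 < Q (u n) := fun n =>
    pos_of_mul_pos_right ((mul_pos he (h2 n).2).trans_le (h2 n).1) (neg_nonneg.2 (h4 n).le)
  have hr : Tendsto (fun n => -lam n / e) atTop (𝓝 0) := by
    simpa using h5.neg.div_const e
  refine tendsto_atTop_of_one_le_interpolationTerm_add (τ₁ := τ₁) (τ₂ := τ₂) hd.le hC.le hθ₁ hθ₂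
    (by linarith) (by linarith) hr0 (fun n => (hQ n).le) hr fun n => ?_
  have hsf : S (u n) ≤ d * F (u n) := by
    rw [← div_le_iff₀' hd, ← one_div_mul_eq_div]; exact (h1 n).1
  have hfq : F (u n) ≤ -lam n / e * Q (u n) := by
    rw [div_mul_eq_mul_div, le_div_iff₀' he]; exact (h2 n).1
  exact one_le_interpolationTerm_add (h1 n).2.le (h2 n).2 (hQ n) hd.le (hr0 n) hC.le hθ₁.le
    hθ₂.le hsf hfq (h3 n)

theorem stmt5 {W : Type*} [NormedAddCommGroup W]
    (S F Q : W → ℝ) (hS : ∀ u, 0 ≤ S u) (hF : ∀ u, 0 ≤ F u) (hQ : ∀ u, 0 ≤ Q u)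
    (lam : ℕ → ℝ) (u : ℕ → W)
    (d e C θ₁ θ₂ τ₁ τ₂ : ℝ) (hd : 0 < d) (he : 0 < e) (hC : 0 < C)
    (hθ₁ : 1 < θ₁) (hθ₂ : 1 < θ₂) (hτ₁ : 0 < τ₁) (hτ₂ : 0 < τ₂)
    (h1 : ∀ n, (1/d) * S (u n) ≤ F (u n) ∧ 0 < S (u n))
    (h2 : ∀ n, e * F (u n) ≤ -(lam n) * Q (u n) ∧ 0 < F (u n))
    (h3 : ∀ n, F (u n) ≤ C * (S (u n) ^ θ₁ * Q (u n) ^ τ₁ + S (u n) ^ θ₂ * Q (u n) ^ τ₂))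
    (h4 : ∀ n, lam n < 0) (h5 : Tendsto lam atTop (𝓝 0)) :
    Tendsto (fun n => Q (u n)) atTop atTop :=
  stmt5_general S F Q lam u d e C θ₁ θ₂ τ₁ τ₂ hd he hC hθ₁ hθ₂ hτ₁ hτ₂ h1 h2 h3 h4 h5
end

section
/- Under the hypotheses of the previous lemma, assume additionally $F_r(r,t)r\le \tau F(r,t)$ for some $\tau\ge 0$, that $\alpha > \frac{2(N+\tau)+4s}{N}$ and $2(N+\tau)-\alpha(N-2s)>0$. Then the energy $\Phi_\lambda(u) = \frac12\int(|(-\Delta)^{s/2}u|^2-\lambda u^2) - \int F(|x|,u)$ satisfies $\Phi_\lambda(u) \ge k\cdot\frac{-\lambda}{2}\int_{\mathbb{R}^N}u^2\,dx$ with $k = \frac{N\alpha-2(N+\tau)-4s}{2(N+\tau)-\alpha(N-2s)}+1 > 1$. -/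
open MeasureTheory
set_option maxHeartbeats 1000000 in

theorem stmt8 (N : ℕ) (hN : 2 ≤ N) (s lam α β θ τ : ℝ)
    (hs0 : 0 < s) (hs1 : s ≤ 1) (hlam : lam < 0)
    (hα : 2 < α) (hαβ : α ≤ β) (hβ : ((N:ℝ) - 2*s) * β < 2 * N)
    (hθ : θ ≤ 0) (hτ : 0 ≤ τ)
    (hα2 : (2*((N:ℝ)+τ) + 4*s)/N < α)
    (hden : 0 < 2*((N:ℝ)+τ) - α*((N:ℝ)-2*s))
    (u : EuclideanSpace ℝ (Fin N) → ℝ) (hu : ∀ x, 0 ≤ u x)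
    (f F Fr : ℝ → ℝ → ℝ)
    (hFnonneg : ∀ r t, 0 ≤ F r t)
    (hFr : ∀ r t, HasDerivAt (fun ρ => F ρ t) (Fr r t) r)
    (hf1 : ∀ r t, 0 < t → α * F r t ≤ f r t * t ∧ f r t * t ≤ β * F r t)
    (hf0 : ∀ r t, t ≤ 0 → f r t = 0 ∧ F r t = 0)
    (hθF : ∀ r t, 0 < t → θ * F r t ≤ Fr r t * r)
    (hτF : ∀ r t, 0 < t → Fr r t * r ≤ τ * F r t)
    (gradSq : ℝ) (hgrad : 0 ≤ gradSq)
    (hint2 : Integrable (fun x => (u x)^2))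
    (hintF : Integrable (fun x => F ‖x‖ (u x)))
    (hintfu : Integrable (fun x => f ‖x‖ (u x) * u x))
    (hintFr : Integrable (fun x => ‖x‖ * Fr ‖x‖ (u x)))
    (hPoh : ((N:ℝ) - 2*s) * gradSq =
      N * lam * (∫ x, (u x)^2) +
        2 * ∫ x, ((N:ℝ) * F ‖x‖ (u x) + ‖x‖ * Fr ‖x‖ (u x)))
    (hNeh : gradSq = lam * (∫ x, (u x)^2) + ∫ x, f ‖x‖ (u x) * u x) :
    (((N:ℝ)*α - 2*((N:ℝ)+τ) - 4*s)/(2*((N:ℝ)+τ) - α*((N:ℝ)-2*s)) + 1) *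
        (-lam/2) * (∫ x, (u x)^2) ≤
      (1/2) * (gradSq - lam * ∫ x, (u x)^2) - (∫ x, F ‖x‖ (u x)) ∧
    1 < ((N:ℝ)*α - 2*((N:ℝ)+τ) - 4*s)/(2*((N:ℝ)+τ) - α*((N:ℝ)-2*s)) + 1 := by
  have hNpos : (0:ℝ) < N := by exact_mod_cast Nat.lt_of_lt_of_le (by norm_num) hN
  set D : ℝ := 2*((N:ℝ)+τ) - α*((N:ℝ)-2*s) with hD
  set A : ℝ := ∫ x, (u x)^2 with hAdef
  set IF : ℝ := ∫ x, F ‖x‖ (u x) with hIFdef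
  have hA0 : 0 ≤ A := integral_nonneg (fun x => sq_nonneg _)
  have hIF0 : 0 ≤ IF := integral_nonneg (fun x => hFnonneg _ _)
  -- Fr vanishes for t ≤ 0
  have hFr0 : ∀ r t, t ≤ 0 → Fr r t = 0 := by
    intro r t ht
    have h1 : HasDerivAt (fun ρ => F ρ t) 0 r := by
      have : (fun ρ => F ρ t) = fun _ => (0:ℝ) := by
        funext ρ; exact (hf0 ρ t ht).2
      rw [this]; exact hasDerivAt_const r 0
    exact (hFr r t).unique h1
  -- α·IF ≤ ∫ f u
  have h1 : α * IF ≤ ∫ x, f ‖x‖ (u x) * u x := by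
    have hmono : ∀ x, α * F ‖x‖ (u x) ≤ f ‖x‖ (u x) * u x := by
      intro x
      rcases lt_or_ge 0 (u x) with h | h
      · exact (hf1 _ _ h).1
      · rw [(hf0 _ _ h).1, (hf0 _ _ h).2]; simp
    calc α * IF = ∫ x, α * F ‖x‖ (u x) := (integral_const_mul α _).symm
      _ ≤ _ := integral_mono (hintF.const_mul α) hintfu hmono
  -- ∫ ‖x‖ Fr ≤ τ·IF
  have h2 : (∫ x, ‖x‖ * Fr ‖x‖ (u x)) ≤ τ * IF := by
    have hmono : ∀ x : EuclideanSpace ℝ (Fin N),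
        ‖x‖ * Fr ‖x‖ (u x) ≤ τ * F ‖x‖ (u x) := by
      intro x
      rcases lt_or_ge 0 (u x) with h | h
      · have := hτF ‖x‖ (u x) h; linarith [this]
      · rw [hFr0 _ _ h, (hf0 _ _ h).2]; simp
    calc (∫ x, ‖x‖ * Fr ‖x‖ (u x)) ≤ ∫ x, τ * F ‖x‖ (u x) :=
          integral_mono hintFr (hintF.const_mul τ) hmono
      _ = τ * IF := integral_const_mul τ _
  -- split the Pohozaev integral
  have hsplit : (∫ x, ((N:ℝ) * F ‖x‖ (u x) + ‖x‖ * Fr ‖x‖ (u x)))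
      = (N:ℝ) * IF + ∫ x, ‖x‖ * Fr ‖x‖ (u x) := by
    rw [integral_add (hintF.const_mul (N:ℝ)) hintFr, integral_const_mul]
  set G : ℝ := gradSq with hG
  have hPoh' : ((N:ℝ) - 2*s) * G ≤ N * lam * A + 2*((N:ℝ)+τ) * IF := by
    rw [hPoh, hsplit]; nlinarith [h2]
  have hNeh' : α * IF ≤ G - lam * A := by rw [hNeh]; linarith [h1]
  -- D·G ≥ (Nα − 2(N+τ))·(−λ)·A
  have hB : ((N:ℝ)*α - 2*((N:ℝ)+τ)) * ((-lam) * A) ≤ D * G := by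
    nlinarith [mul_le_mul_of_nonneg_left hNeh' (le_of_lt (by linarith : (0:ℝ) < 2*((N:ℝ)+τ)))]
  have hlamA : 0 ≤ (-lam) * A := mul_nonneg (by linarith) hA0
  have e1 : 2*α*s*((-lam)*A) ≤ D*(G - lam*A) := by nlinarith [hB, hlamA]
  have e2 : (α-2)*(2*α*s*((-lam)*A)) ≤ (α-2)*(D*(G-lam*A)) :=
    mul_le_mul_of_nonneg_left e1 (by linarith)
  have e3 : α*(D*IF) ≤ D*(G-lam*A) := by
    calc α*(D*IF) = D*(α*IF) := by ring
      _ ≤ D*(G-lam*A) := mul_le_mul_of_nonneg_left hNeh' hden.le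
  clear_value D A IF G
  have hnum : 0 < (N:ℝ)*α - 2*((N:ℝ)+τ) - 4*s := by
    rw [div_lt_iff₀ hNpos] at hα2; linarith [hα2]
  clear hPoh hNeh h1 h2 hsplit hIFdef hAdef hG hint2 hintF hintfu hintFr hFr hf1 hf0 hθF hτF hFnonneg hFr0 hu u f F Fr hB e1 hPoh' hNeh' gradSq
  constructor
  · have hk : ((N:ℝ)*α - 2*((N:ℝ)+τ) - 4*s)/D + 1 = (2*s*(α-2))/D := by
      rw [div_add' _ _ _ hden.ne', hD]; ring
    rw [hk, div_mul_eq_mul_div, div_mul_eq_mul_div, div_le_iff₀ hden]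
    have hpos : (0:ℝ) < 2*α := by linarith
    refine le_of_mul_le_mul_left ?_ hpos
    nlinarith [e2, e3]
  · have : 0 < ((N:ℝ)*α - 2*((N:ℝ)+τ) - 4*s)/D := div_pos hnum hden
    linarith
end
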